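/- arXiv:1902.00435 — 6 statements merged into one kernel-verified Lean document; each statement's English description precedes it below -/
import Mathlib

section
/- Prefix/suffix-closure of monitorable fragments over finfinite traces: (i) if φ is in the safety fragment (built from tt, ff, [A]φ, conjunction, disjunction, greatest fixpoints, variables) and the finfinite trace s·g satisfies φ (where s is finite), then the finite trace s satisfies φ; (ii) if φ is in the cosafety fragment (built from tt, ff, ⟨A⟩φ, conjunction, disjunction, least fixpoints, variables) and the finite trace s satisfies φ, then every extension s·g satisfies φ. -/
inductive HFrm (Act : Type) : Type
  | tt : HFrm Act
  | ff : HFrm Act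
  | orf : HFrm Act → HFrm Act → HFrm Act
  | andf : HFrm Act → HFrm Act → HFrm Act
  | dia : Set Act → HFrm Act → HFrm Act
  | box : Set Act → HFrm Act → HFrm Act
  | fmin : ℕ → HFrm Act → HFrm Act
  | fmax : ℕ → HFrm Act → HFrm Act
  | var : ℕ → HFrm Act

/-- Finfinite traces: finite or infinite sequences of actions. -/
abbrev FTrc (Act : Type) := List Act ⊕ (ℕ → Act)

/-- Prepending an action to a finfinite trace. -/
def fcons {Act : Type} (a : Act) : FTrc Act → FTrc Act
  | Sum.inl s => Sum.inl (a :: s)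
  | Sum.inr t => Sum.inr (fun i => match i with | 0 => a | j + 1 => t j)

/-- Finfinite linear-time semantics of recHML. -/
def fsem {Act : Type} : HFrm Act → (ℕ → Set (FTrc Act)) → Set (FTrc Act)
  | HFrm.tt, _ => Set.univ
  | HFrm.ff, _ => ∅
  | HFrm.orf φ ψ, σ => fsem φ σ ∪ fsem ψ σ
  | HFrm.andf φ ψ, σ => fsem φ σ ∩ fsem ψ σ
  | HFrm.dia A φ, σ => {g | ∃ a ∈ A, ∃ g', g = fcons a g' ∧ g' ∈ fsem φ σ}
  | HFrm.box A φ, σ => {g | ∀ a ∈ A, ∀ g', g = fcons a g' → g' ∈ fsem φ σ}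
  | HFrm.fmin X φ, σ => ⋂₀ {T | fsem φ (Function.update σ X T) ⊆ T}
  | HFrm.fmax X φ, σ => ⋃₀ {T | T ⊆ fsem φ (Function.update σ X T)}
  | HFrm.var X, σ => σ X

/-- Free recursion variables of a formula. -/
def fv {Act : Type} : HFrm Act → Finset ℕ
  | HFrm.tt => ∅
  | HFrm.ff => ∅
  | HFrm.orf φ ψ => fv φ ∪ fv ψ
  | HFrm.andf φ ψ => fv φ ∪ fv ψ
  | HFrm.dia _ φ => fv φ
  | HFrm.box _ φ => fv φ
  | HFrm.fmin X φ => fv φ \ {X}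
  | HFrm.fmax X φ => fv φ \ {X}
  | HFrm.var X => {X}

/-- `Guarded G φ` says every fixpoint variable (together with the currently
unguarded bound variables `G`) occurs under a modality within its binder. -/
def Guarded {Act : Type} : Finset ℕ → HFrm Act → Prop
  | _, HFrm.tt => True
  | _, HFrm.ff => True
  | G, HFrm.orf φ ψ => Guarded G φ ∧ Guarded G ψ
  | G, HFrm.andf φ ψ => Guarded G φ ∧ Guarded G ψ
  | _, HFrm.dia _ φ => Guarded ∅ φ
  | _, HFrm.box _ φ => Guarded ∅ φ
  | G, HFrm.fmin X φ => Guarded (insert X G) φ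
  | G, HFrm.fmax X φ => Guarded (insert X G) φ
  | G, HFrm.var X => X ∉ G

/-- The safety fragment over finfinite traces: tt, ff, [A]φ, ∨, ∧, max, X. -/
inductive InSafe {Act : Type} : HFrm Act → Prop
  | tt : InSafe HFrm.tt
  | ff : InSafe HFrm.ff
  | box (A : Set Act) {φ : HFrm Act} : InSafe φ → InSafe (HFrm.box A φ)
  | orf {φ ψ : HFrm Act} : InSafe φ → InSafe ψ → InSafe (HFrm.orf φ ψ)
  | andf {φ ψ : HFrm Act} : InSafe φ → InSafe ψ → InSafe (HFrm.andf φ ψ)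
  | fmax (X : ℕ) {φ : HFrm Act} : InSafe φ → InSafe (HFrm.fmax X φ)
  | var (X : ℕ) : InSafe (HFrm.var X)

/-- The cosafety fragment over finfinite traces: tt, ff, ⟨A⟩φ, ∨, ∧, min, X. -/
inductive InCosafe {Act : Type} : HFrm Act → Prop
  | tt : InCosafe HFrm.tt
  | ff : InCosafe HFrm.ff
  | dia (A : Set Act) {φ : HFrm Act} : InCosafe φ → InCosafe (HFrm.dia A φ)
  | orf {φ ψ : HFrm Act} : InCosafe φ → InCosafe ψ → InCosafe (HFrm.orf φ ψ)
  | andf {φ ψ : HFrm Act} : InCosafe φ → InCosafe ψ → InCosafe (HFrm.andf φ ψ)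
  | fmin (X : ℕ) {φ : HFrm Act} : InCosafe φ → InCosafe (HFrm.fmin X φ)
  | var (X : ℕ) : InCosafe (HFrm.var X)

/-- Appending a finite trace in front of a finfinite trace. -/
def fappend {Act : Type} : List Act → FTrc Act → FTrc Act
  | [], g => g
  | a :: s, g => fcons a (fappend s g)

/-!
Prefix-closure of a set of traces (`s·g ∈ S → s ∈ S`) is preserved by `∧`, `∨` and `[A]`, and
extension-closure (`s ∈ S → s·g ∈ S`) by `∧`, `∨` and `⟨A⟩`. Prefix-closed sets are closed under
arbitrary intersections and extension-closed sets under arbitrary unions, which is exactly what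
fixpoint induction needs to carry the property to greatest fixpoints (`max X.φ`) and to least
fixpoints (`min X.φ`), respectively.
-/

section

variable {Act : Type}

def PrefixClosed (S : Set (FTrc Act)) : Prop :=
  ∀ s g, fappend s g ∈ S → (Sum.inl s : FTrc Act) ∈ S

def ExtensionClosed (S : Set (FTrc Act)) : Prop :=
  ∀ s g, (Sum.inl s : FTrc Act) ∈ S → fappend s g ∈ S

theorem prefixClosed_sInter {𝒮 : Set (Set (FTrc Act))} (h : ∀ S ∈ 𝒮, PrefixClosed S) :
    PrefixClosed (⋂₀ 𝒮) :=
  fun s g hsg S hS => h S hS s g (hsg S hS)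

theorem extensionClosed_sUnion {𝒮 : Set (Set (FTrc Act))} (h : ∀ S ∈ 𝒮, ExtensionClosed S) :
    ExtensionClosed (⋃₀ 𝒮) := by
  rintro s g ⟨S, hS, hs⟩
  exact ⟨S, hS, h S hS s g hs⟩

theorem fcons_eq_inl_iff {a : Act} {x : FTrc Act} {l : List Act} :
    fcons a x = Sum.inl l ↔ ∃ l', x = Sum.inl l' ∧ l = a :: l' := by
  cases x <;> simp [fcons, eq_comm]

theorem fsem_mono (φ : HFrm Act) : Monotone (fsem φ) := by
  induction φ with
  | tt | ff => exact fun _ _ _ => le_rfl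
  | orf φ ψ ihφ ihψ => exact fun _ _ h => Set.union_subset_union (ihφ h) (ihψ h)
  | andf φ ψ ihφ ihψ => exact fun _ _ h => Set.inter_subset_inter (ihφ h) (ihψ h)
  | dia A φ ih =>
    rintro _ _ h x ⟨a, ha, g, rfl, hg⟩
    exact ⟨a, ha, g, rfl, ih h hg⟩
  | box A φ ih => exact fun _ _ h x hx a ha g hg => ih h (hx a ha g hg)
  | fmin X φ ih =>
    exact fun _ _ h => Set.sInter_subset_sInter fun T hT =>
      (ih (update_le_update_iff.2 ⟨le_rfl, fun Y _ => h Y⟩)).trans hT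
  | fmax X φ ih =>
    exact fun _ _ h => Set.sUnion_subset_sUnion fun T hT =>
      hT.trans (ih (update_le_update_iff.2 ⟨le_rfl, fun Y _ => h Y⟩))
  | var X => exact fun _ _ h => h X

def fsemStep (φ : HFrm Act) (σ : ℕ → Set (FTrc Act)) (X : ℕ) :
    Set (FTrc Act) →o Set (FTrc Act) :=
  ⟨fun T => fsem φ (Function.update σ X T), (fsem_mono φ).comp Function.update_mono⟩

theorem fsem_fmin (φ : HFrm Act) (σ : ℕ → Set (FTrc Act)) (X : ℕ) :
    fsem (HFrm.fmin X φ) σ = (fsemStep φ σ X).lfp :=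
  rfl

theorem fsem_fmax (φ : HFrm Act) (σ : ℕ → Set (FTrc Act)) (X : ℕ) :
    fsem (HFrm.fmax X φ) σ = (fsemStep φ σ X).gfp :=
  rfl

theorem forall_fv_update {P : Set (FTrc Act) → Prop} {σ : ℕ → Set (FTrc Act)} {X : ℕ}
    {φ : HFrm Act} {T : Set (FTrc Act)} (hσ : ∀ Y ∈ fv φ \ {X}, P (σ Y)) (hT : P T) :
    ∀ Y ∈ fv φ, P (Function.update σ X T Y) := by
  intro Y hY
  rcases eq_or_ne Y X with rfl | hYX
  · simpa using hT
  · simpa [hYX] using hσ Y (by simp [hY, hYX])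

theorem InSafe.prefixClosed {φ : HFrm Act} (h : InSafe φ) {σ : ℕ → Set (FTrc Act)}
    (hσ : ∀ X ∈ fv φ, PrefixClosed (σ X)) : PrefixClosed (fsem φ σ) := by
  induction h generalizing σ with
  | tt => exact fun _ _ _ => trivial
  | ff => exact fun _ _ h => h
  | box A _ ih =>
    intro s g hsg a ha x hx
    obtain ⟨s', rfl, rfl⟩ := fcons_eq_inl_iff.1 hx.symm
    exact ih hσ s' g (hsg a ha _ rfl)
  | orf _ _ ihφ ihψ =>
    have hφ := ihφ fun X hX => hσ X (Finset.mem_union_left _ hX)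
    have hψ := ihψ fun X hX => hσ X (Finset.mem_union_right _ hX)
    exact fun s g => Or.imp (hφ s g) (hψ s g)
  | andf _ _ ihφ ihψ =>
    have hφ := ihφ fun X hX => hσ X (Finset.mem_union_left _ hX)
    have hψ := ihψ fun X hX => hσ X (Finset.mem_union_right _ hX)
    exact fun s g => And.imp (hφ s g) (hψ s g)
  | fmax X _ ih =>
    rw [fsem_fmax]
    exact (fsemStep _ σ X).gfp_induction (fun T hT _ => ih (forall_fv_update hσ hT))
      fun _ => prefixClosed_sInter
  | var X => exact hσ X (Finset.mem_singleton_self X)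

theorem InCosafe.extensionClosed {φ : HFrm Act} (h : InCosafe φ) {σ : ℕ → Set (FTrc Act)}
    (hσ : ∀ X ∈ fv φ, ExtensionClosed (σ X)) : ExtensionClosed (fsem φ σ) := by
  induction h generalizing σ with
  | tt => exact fun _ _ _ => trivial
  | ff => exact fun _ _ h => h
  | dia A _ ih =>
    rintro s g ⟨a, ha, x, hx, hxφ⟩
    obtain ⟨s', rfl, rfl⟩ := fcons_eq_inl_iff.1 hx.symm
    exact ⟨a, ha, fappend s' g, rfl, ih hσ s' g hxφ⟩
  | orf _ _ ihφ ihψ =>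
    have hφ := ihφ fun X hX => hσ X (Finset.mem_union_left _ hX)
    have hψ := ihψ fun X hX => hσ X (Finset.mem_union_right _ hX)
    exact fun s g => Or.imp (hφ s g) (hψ s g)
  | andf _ _ ihφ ihψ =>
    have hφ := ihφ fun X hX => hσ X (Finset.mem_union_left _ hX)
    have hψ := ihψ fun X hX => hσ X (Finset.mem_union_right _ hX)
    exact fun s g => And.imp (hφ s g) (hψ s g)
  | fmin X _ ih =>
    rw [fsem_fmin]
    exact (fsemStep _ σ X).lfp_induction (fun T hT _ => ih (forall_fv_update hσ hT))
      fun _ => extensionClosed_sUnion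
  | var X => exact hσ X (Finset.mem_singleton_self X)

end

theorem fragment_prefix_suffix_closure_general {Act : Type} (φ : HFrm Act)
    (hcl : fv φ = ∅)
    (σ : ℕ → Set (FTrc Act)) (s : List Act) (g : FTrc Act) :
    (InSafe φ → fappend s g ∈ fsem φ σ → (Sum.inl s : FTrc Act) ∈ fsem φ σ) ∧
    (InCosafe φ → (Sum.inl s : FTrc Act) ∈ fsem φ σ → fappend s g ∈ fsem φ σ) :=
  ⟨fun h => h.prefixClosed (by simp [hcl]) s g, fun h => h.extensionClosed (by simp [hcl]) s g⟩

/-- Prefix/suffix-closure of the monitorable fragments over finfinite traces: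
(i) safety formulae are prefix-closed; (ii) cosafety formulae are closed under
extensions. -/
theorem fragment_prefix_suffix_closure {Act : Type} (φ : HFrm Act)
    (hcl : fv φ = ∅) (hg : Guarded ∅ φ)
    (σ : ℕ → Set (FTrc Act)) (s : List Act) (g : FTrc Act) :
    (InSafe φ → fappend s g ∈ fsem φ σ → (Sum.inl s : FTrc Act) ∈ fsem φ σ) ∧
    (InCosafe φ → (Sum.inl s : FTrc Act) ∈ fsem φ σ → fappend s g ∈ fsem φ σ) :=
  fragment_prefix_suffix_closure_general φ hcl σ s g
end

section
/- For every recHML formula φ, the set of infinite traces satisfying φ under the finfinite semantics equals the set of infinite traces satisfying φ under the infinite-trace linear-time semantics: ⟦φ⟧_F ∩ Act^ω = ⟦φ⟧_L. -/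
/-- Linear-time semantics of recHML over infinite traces. -/
def lsem {Act : Type} : HFrm Act → (ℕ → Set (ℕ → Act)) → Set (ℕ → Act)
  | HFrm.tt, _ => Set.univ
  | HFrm.ff, _ => ∅
  | HFrm.orf φ ψ, σ => lsem φ σ ∪ lsem ψ σ
  | HFrm.andf φ ψ, σ => lsem φ σ ∩ lsem ψ σ
  | HFrm.dia A φ, σ => {t | t 0 ∈ A ∧ (fun i => t (i + 1)) ∈ lsem φ σ}
  | HFrm.box A φ, σ => {t | t 0 ∈ A → (fun i => t (i + 1)) ∈ lsem φ σ}
  | HFrm.fmin X φ, σ => ⋂₀ {T | lsem φ (Function.update σ X T) ⊆ T}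
  | HFrm.fmax X φ, σ => ⋃₀ {T | T ⊆ lsem φ (Function.update σ X T)}
  | HFrm.var X, σ => σ X

/-!
Restricting a set of finfinite traces to its infinite traces is the preimage under the
injection `Sum.inr`, and it commutes with every clause of the semantics. For the modalities
this is because an infinite trace is `fcons a g` only for `g` infinite. For the fixpoints,
preimage under an injection maps the (post-)prefixed points of the finfinite clause onto
those of the infinite one: a prefixed point `S` lifts to the largest set with preimage `S`,
a postfixed point to the smallest, `Sum.inr '' S`.
-/

open Function Set

section PreimageFixpoints

variable {α β : Type*} {f : β → α} {F : Set α → Set α} {G : Set β → Set β}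

theorem preimage_sInter_prefixed (hf : Injective f) (hFG : ∀ T, f ⁻¹' F T = G (f ⁻¹' T)) :
    f ⁻¹' ⋂₀ {T | F T ⊆ T} = ⋂₀ {S | G S ⊆ S} := by
  ext b
  simp only [mem_preimage, mem_sInter, mem_ofPred_eq]
  constructor
  · intro hb S hS
    have hlift : f ⁻¹' (f '' Sᶜ)ᶜ = S := by
      rw [preimage_compl, preimage_image_eq _ hf, compl_compl]
    have hpre : F (f '' Sᶜ)ᶜ ⊆ (f '' Sᶜ)ᶜ := by
      rintro _ ha ⟨b', hb'S, rfl⟩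
      exact hb'S (hS (by rw [← hlift, ← hFG]; exact ha))
    have hbT := hb _ hpre
    rwa [← mem_preimage, hlift] at hbT
  · intro hb T hT
    exact hb (f ⁻¹' T) (hFG T ▸ preimage_mono hT)

theorem preimage_sUnion_postfixed (hf : Injective f) (hFG : ∀ T, f ⁻¹' F T = G (f ⁻¹' T)) :
    f ⁻¹' ⋃₀ {T | T ⊆ F T} = ⋃₀ {S | S ⊆ G S} := by
  ext b
  simp only [mem_preimage, mem_sUnion, mem_ofPred_eq]
  constructor
  · rintro ⟨T, hT, hbT⟩
    exact ⟨f ⁻¹' T, hFG T ▸ preimage_mono hT, hbT⟩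
  · rintro ⟨S, hS, hbS⟩
    refine ⟨f '' S, ?_, mem_image_of_mem f hbS⟩
    rintro _ ⟨b', hb'S, rfl⟩
    have hb'G := hS hb'S
    rwa [← preimage_image_eq S hf, ← hFG] at hb'G

end PreimageFixpoints

variable {Act : Type}

theorem fcons_eq_inr_iff {a : Act} {g : FTrc Act} {t : ℕ → Act} :
    fcons a g = Sum.inr t ↔ t 0 = a ∧ g = Sum.inr (fun i => t (i + 1)) := by
  cases g with
  | inl s => simp [fcons]
  | inr u =>
    simp only [fcons, Sum.inr.injEq, funext_iff]
    constructor
    · intro h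
      exact ⟨(h 0).symm, fun i => h (i + 1)⟩
    · rintro ⟨h0, hu⟩ (_ | i)
      exacts [h0.symm, hu i]

theorem preimage_inr_fsem (φ : HFrm Act) (σ : ℕ → Set (FTrc Act)) :
    Sum.inr ⁻¹' fsem φ σ = lsem φ (preimage Sum.inr ∘ σ) := by
  induction φ generalizing σ with
  | tt => rfl
  | ff => rfl
  | orf φ ψ ihφ ihψ => simp only [fsem, lsem, preimage_union, ihφ, ihψ]
  | andf φ ψ ihφ ihψ => simp only [fsem, lsem, preimage_inter, ihφ, ihψ]
  | dia A φ ih =>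
    ext t
    simp only [fsem, lsem, ← ih, mem_preimage, mem_ofPred_eq, eq_comm (a := Sum.inr t),
      fcons_eq_inr_iff]
    simp
  | box A φ ih =>
    ext t
    simp only [fsem, lsem, ← ih, mem_preimage, mem_ofPred_eq, eq_comm (a := Sum.inr t),
      fcons_eq_inr_iff]
    constructor
    · exact fun h ha => h _ ha _ ⟨rfl, rfl⟩
    · rintro h a ha _ ⟨rfl, rfl⟩
      exact h ha
  | fmin X φ ih =>
    refine preimage_sInter_prefixed Sum.inr_injective fun T => ?_
    rw [ih, comp_update]
  | fmax X φ ih =>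
    refine preimage_sUnion_postfixed Sum.inr_injective fun T => ?_
    rw [ih, comp_update]
  | var X => rfl

theorem fsem_restricted_to_infinite_eq_lsem_general {Act : Type} (φ : HFrm Act)
    (σ : ℕ → Set (FTrc Act)) :
    {t : ℕ → Act | (Sum.inr t : FTrc Act) ∈ fsem φ σ} =
      lsem φ (fun X => {t : ℕ → Act | (Sum.inr t : FTrc Act) ∈ σ X}) :=
  preimage_inr_fsem φ σ

/-- The infinite traces satisfying a closed formula under the finfinite semantics
are exactly the traces satisfying it under the infinite-trace linear-time
semantics: `⟦φ⟧_F ∩ Act^ω = ⟦φ⟧_L`. -/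
theorem fsem_restricted_to_infinite_eq_lsem {Act : Type} (φ : HFrm Act)
    (hcl : fv φ = ∅) (σ : ℕ → Set (FTrc Act)) :
    {t : ℕ → Act | (Sum.inr t : FTrc Act) ∈ fsem φ σ} =
      lsem φ (fun X => {t : ℕ → Act | (Sum.inr t : FTrc Act) ∈ σ X}) :=
  fsem_restricted_to_infinite_eq_lsem_general φ σ
end

section
/- If a process p represents the finfinite trace g, then g satisfies φ under the finfinite semantics if and only if p satisfies φ under the branching-time semantics, for every closed recHML formula φ. -/
/-- Composition of single transitions along an explicit trace
(a finite sequence of actions and τ's). -/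
inductive ESteps {Act S : Type} (tr : S → Option Act → S → Prop) :
    S → List (Option Act) → S → Prop
  | refl (s : S) : ESteps tr s [] s
  | step {s s' s'' : S} {μ : Option Act} {l : List (Option Act)} :
      tr s μ s' → ESteps tr s' l s'' → ESteps tr s (μ :: l) s''

/-- Weak transition sequences: consume the external actions of a finite trace,
absorbing τ-steps. -/
inductive WSteps {Act S : Type} (tr : S → Option Act → S → Prop) :
    S → List Act → S → Prop
  | refl (s : S) : WSteps tr s [] s
  | tau {s s' s'' : S} {l : List Act} :
      tr s none s' → WSteps tr s' l s'' → WSteps tr s l s''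
  | act {s s' s'' : S} {a : Act} {l : List Act} :
      tr s (some a) s' → WSteps tr s' l s'' → WSteps tr s (a :: l) s''

/-- Branching-time semantics of recHML over processes of an LTS,
with weak modalities. -/
def bsem {Act Proc : Type} (tr : Proc → Option Act → Proc → Prop) :
    HFrm Act → (ℕ → Set Proc) → Set Proc
  | HFrm.tt, _ => Set.univ
  | HFrm.ff, _ => ∅
  | HFrm.orf φ ψ, ρ => bsem tr φ ρ ∪ bsem tr ψ ρ
  | HFrm.andf φ ψ, ρ => bsem tr φ ρ ∩ bsem tr ψ ρ
  | HFrm.dia A φ, ρ => {p | ∃ a ∈ A, ∃ q, WSteps tr p [a] q ∧ q ∈ bsem tr φ ρ}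
  | HFrm.box A φ, ρ => {p | ∀ a ∈ A, ∀ q, WSteps tr p [a] q → q ∈ bsem tr φ ρ}
  | HFrm.fmin X φ, ρ => ⋂₀ {P | bsem tr φ (Function.update ρ X P) ⊆ P}
  | HFrm.fmax X φ, ρ => ⋃₀ {P | P ⊆ bsem tr φ (Function.update ρ X P)}
  | HFrm.var X, ρ => ρ X

/-- `FPrefix s g` : the finite trace `s` is a prefix of the finfinite trace `g`. -/
def FPrefix {Act : Type} (s : List Act) : FTrc Act → Prop
  | Sum.inl l => s <+: l
  | Sum.inr t => s = (List.range s.length).map t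

/-- A process is a trace-process when it (and every process reachable from it)
is deterministic. -/
def IsTraceProc {Act Proc : Type} (tr : Proc → Option Act → Proc → Prop)
    (p : Proc) : Prop :=
  ∀ q : Proc, (∃ s : List (Option Act), ESteps tr p s q) →
    ∀ (μ μ' : Option Act) (r r' : Proc), tr q μ r → tr q μ' r' → μ = μ' ∧ r = r'

/-- A trace-process `p` represents the finfinite trace `g` when `p` can weakly
perform a finite trace `s` iff `s` is a prefix of `g`. -/
def Represents {Act Proc : Type} (tr : Proc → Option Act → Proc → Prop)
    (p : Proc) (g : FTrc Act) : Prop :=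
  IsTraceProc tr p ∧ ∀ s : List Act, (∃ q, WSteps tr p s q) ↔ FPrefix s g

/-!
A process `p` that represents `g` is related to `g` by a bisimulation between the weak
single-action steps `p ==a==> q` of the LTS and the steps `fcons a g' ⟶ g'` of traces:
determinism forces every weak `a`-derivative of `p` to represent the tail of `g`, and
`p` has one whenever `g` starts with `a`. Bisimilar states satisfy the same recHML formulas;
at a fixpoint, a pre- or post-fixed point on one side is transported along the relation to
the other side.
-/

section Bisimulation

variable {Act S T : Type}

def msem (step : S → Act → S → Prop) : HFrm Act → (ℕ → Set S) → Set S
  | HFrm.tt, _ => Set.univ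
  | HFrm.ff, _ => ∅
  | HFrm.orf φ ψ, σ => msem step φ σ ∪ msem step ψ σ
  | HFrm.andf φ ψ, σ => msem step φ σ ∩ msem step ψ σ
  | HFrm.dia A φ, σ => {s | ∃ a ∈ A, ∃ s', step s a s' ∧ s' ∈ msem step φ σ}
  | HFrm.box A φ, σ => {s | ∀ a ∈ A, ∀ s', step s a s' → s' ∈ msem step φ σ}
  | HFrm.fmin X φ, σ => ⋂₀ {U | msem step φ (Function.update σ X U) ⊆ U}
  | HFrm.fmax X φ, σ => ⋃₀ {U | U ⊆ msem step φ (Function.update σ X U)}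
  | HFrm.var X, σ => σ X

theorem fsem_eq_msem (φ : HFrm Act) (σ : ℕ → Set (FTrc Act)) :
    fsem φ σ = msem (fun g a g' => g = fcons a g') φ σ := by
  induction φ generalizing σ <;> simp only [fsem, msem, *]

theorem bsem_eq_msem {Proc : Type} (tr : Proc → Option Act → Proc → Prop) (φ : HFrm Act)
    (ρ : ℕ → Set Proc) : bsem tr φ ρ = msem (fun p a q => WSteps tr p [a] q) φ ρ := by
  induction φ generalizing ρ <;> simp only [bsem, msem, *]

structure IsBisimulation (step₁ : S → Act → S → Prop) (step₂ : T → Act → T → Prop)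
    (R : S → T → Prop) : Prop where
  forth : ∀ {s t a s'}, R s t → step₁ s a s' → ∃ t', step₂ t a t' ∧ R s' t'
  back : ∀ {s t a t'}, R s t → step₂ t a t' → ∃ s', step₁ s a s' ∧ R s' t'

variable {step₁ : S → Act → S → Prop} {step₂ : T → Act → T → Prop} {R : S → T → Prop}

theorem IsBisimulation.flip (hR : IsBisimulation step₁ step₂ R) :
    IsBisimulation step₂ step₁ (flip R) :=
  ⟨hR.back, hR.forth⟩

def EnvSim (R : S → T → Prop) (V : Finset ℕ) (σ₁ : ℕ → Set S) (σ₂ : ℕ → Set T) : Prop :=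
  ∀ X ∈ V, ∀ s t, R s t → s ∈ σ₁ X → t ∈ σ₂ X

theorem EnvSim.mono {V W : Finset ℕ} {σ₁ : ℕ → Set S} {σ₂ : ℕ → Set T}
    (h : EnvSim R W σ₁ σ₂) (hVW : V ⊆ W) : EnvSim R V σ₁ σ₂ :=
  fun X hX => h X (hVW hX)

theorem envSim_empty (σ₁ : ℕ → Set S) (σ₂ : ℕ → Set T) : EnvSim R ∅ σ₁ σ₂ := by
  simp [EnvSim]

theorem EnvSim.update {V : Finset ℕ} {σ₁ : ℕ → Set S} {σ₂ : ℕ → Set T} {X : ℕ}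
    {U₁ : Set S} {U₂ : Set T} (h : EnvSim R (V \ {X}) σ₁ σ₂)
    (hU : ∀ s t, R s t → s ∈ U₁ → t ∈ U₂) :
    EnvSim R V (Function.update σ₁ X U₁) (Function.update σ₂ X U₂) := by
  intro Y hY
  rcases eq_or_ne Y X with rfl | hYX
  · simpa only [Function.update_self] using hU
  · simpa only [Function.update_of_ne hYX] using h Y (by simp [hY, hYX])

theorem IsBisimulation.mem_msem (hR : IsBisimulation step₁ step₂ R) (φ : HFrm Act)
    {σ₁ : ℕ → Set S} {σ₂ : ℕ → Set T} (henv : EnvSim R (fv φ) σ₁ σ₂) {s : S} {t : T}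
    (hst : R s t) (hs : s ∈ msem step₁ φ σ₁) : t ∈ msem step₂ φ σ₂ := by
  induction φ generalizing σ₁ σ₂ s t with
  | tt => trivial
  | ff => exact hs.elim
  | orf φ ψ ihφ ihψ =>
    rcases hs with hs | hs
    · exact Or.inl (ihφ (henv.mono Finset.subset_union_left) hst hs)
    · exact Or.inr (ihψ (henv.mono Finset.subset_union_right) hst hs)
  | andf φ ψ ihφ ihψ =>
    exact ⟨ihφ (henv.mono Finset.subset_union_left) hst hs.1,
      ihψ (henv.mono Finset.subset_union_right) hst hs.2⟩
  | dia A φ ih =>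
    obtain ⟨a, ha, s', hss', hs'⟩ := hs
    obtain ⟨t', htt', hst'⟩ := hR.forth hst hss'
    exact ⟨a, ha, t', htt', ih henv hst' hs'⟩
  | box A φ ih =>
    intro a ha t' htt'
    obtain ⟨s', hss', hst'⟩ := hR.back hst htt'
    exact ih henv hst' (hs a ha s' hss')
  | fmin X φ ih =>
    intro U₂ hU₂
    -- the largest set whose `R`-image lies in the pre-fixed point `U₂`
    let U₁ : Set S := {s | ∀ t, R s t → t ∈ U₂}
    have hU₁ : msem step₁ φ (Function.update σ₁ X U₁) ⊆ U₁ := fun s' hs' t' hst' =>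
      hU₂ (ih (henv.update (U₁ := U₁) fun _ _ hst hs => hs _ hst) hst' hs')
    exact hs U₁ hU₁ t hst
  | fmax X φ ih =>
    obtain ⟨U₁, hU₁, hsU₁⟩ := hs
    let U₂ : Set T := {t | ∃ s ∈ U₁, R s t}
    have hU₂ : U₂ ⊆ msem step₂ φ (Function.update σ₂ X U₂) := fun t' ⟨s', hs', hst'⟩ =>
      ih (henv.update (U₂ := U₂) fun s _ hst hs => ⟨s, hs, hst⟩) hst' (hU₁ hs')
    exact ⟨U₂, hU₂, s, hsU₁, hst⟩
  | var X => exact henv X (by simp [fv]) s t hst hs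

end Bisimulation

section TraceProcess

variable {Act Proc : Type} {tr : Proc → Option Act → Proc → Prop}

theorem ESteps.append {p q r : Proc} {l l' : List (Option Act)} (h : ESteps tr p l q)
    (h' : ESteps tr q l' r) : ESteps tr p (l ++ l') r := by
  induction h with
  | refl => exact h'
  | step hstep _ ih => exact .step hstep (ih h')

theorem ESteps.wsteps {p q : Proc} {l : List (Option Act)} (h : ESteps tr p l q) :
    WSteps tr p (l.filterMap id) q := by
  induction h with
  | refl => exact .refl _
  | @step _ _ _ μ _ hstep _ ih =>
    cases μ with
    | none => exact .tau hstep ih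
    | some _ => exact .act hstep ih

theorem WSteps.append {p q r : Proc} {s s' : List Act} (h : WSteps tr p s q)
    (h' : WSteps tr q s' r) : WSteps tr p (s ++ s') r := by
  induction h with
  | refl => exact h'
  | tau hstep _ ih => exact .tau hstep (ih h')
  | act hstep _ ih => exact .act hstep (ih h')

theorem WSteps.exists_esteps {p q : Proc} {s : List Act} (h : WSteps tr p s q) :
    ∃ l, ESteps tr p l q ∧ l.filterMap id = s := by
  induction h with
  | refl => exact ⟨[], .refl _, rfl⟩
  | tau hstep _ ih =>
    obtain ⟨l, he, hl⟩ := ih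
    exact ⟨none :: l, .step hstep he, hl⟩
  | act hstep _ ih =>
    obtain ⟨l, he, hl⟩ := ih
    exact ⟨some _ :: l, .step hstep he, congrArg _ hl⟩

theorem IsTraceProc.of_esteps {p q : Proc} {l : List (Option Act)} (htp : IsTraceProc tr p)
    (h : ESteps tr p l q) : IsTraceProc tr q :=
  fun r ⟨l', hr⟩ => htp r ⟨l ++ l', h.append hr⟩

theorem IsTraceProc.exists_append_of_esteps {p q₁ q₂ : Proc} {l₁ l₂ : List (Option Act)}
    (htp : IsTraceProc tr p) (h₁ : ESteps tr p l₁ q₁) (h₂ : ESteps tr p l₂ q₂)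
    (hlen : l₁.length ≤ l₂.length) : ∃ d, l₂ = l₁ ++ d ∧ ESteps tr q₁ d q₂ := by
  induction h₁ generalizing l₂ with
  | refl => exact ⟨l₂, rfl, h₂⟩
  | step hstep hrest ih =>
    cases h₂ with
    | refl => simp at hlen
    | step hstep' hrest' =>
      obtain ⟨rfl, rfl⟩ := htp _ ⟨[], .refl _⟩ _ _ _ _ hstep hstep'
      obtain ⟨d, rfl, hd⟩ :=
        ih (htp.of_esteps (.step hstep (.refl _))) hrest' (by simpa using hlen)
      exact ⟨d, rfl, hd⟩

theorem IsTraceProc.exists_wsteps_of_wsteps_cons {p q r : Proc} {a : Act} {s : List Act}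
    (htp : IsTraceProc tr p) (h₁ : WSteps tr p [a] q) (h₂ : WSteps tr p (a :: s) r) :
    ∃ r', WSteps tr q s r' := by
  obtain ⟨l₁, e₁, f₁⟩ := h₁.exists_esteps
  obtain ⟨l₂, e₂, f₂⟩ := h₂.exists_esteps
  rcases le_total l₁.length l₂.length with hlen | hlen
  · obtain ⟨d, rfl, hd⟩ := htp.exists_append_of_esteps e₁ e₂ hlen
    rw [List.filterMap_append, f₁, List.singleton_append, List.cons.injEq] at f₂
    exact ⟨r, f₂.2 ▸ hd.wsteps⟩
  · obtain ⟨d, rfl, _⟩ := htp.exists_append_of_esteps e₂ e₁ hlen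
    rw [List.filterMap_append, f₂] at f₁
    obtain rfl : s = [] := (List.append_eq_nil_iff.mp (List.cons.inj f₁).2).1
    exact ⟨q, .refl q⟩

theorem fprefix_nil (g : FTrc Act) : FPrefix [] g := by
  cases g <;> simp [FPrefix]

theorem fprefix_cons_fcons {a : Act} {s : List Act} {g : FTrc Act} :
    FPrefix (a :: s) (fcons a g) ↔ FPrefix s g := by
  cases g with
  | inl l => simp [FPrefix, fcons, List.cons_prefix_cons]
  | inr t =>
    show a :: s = (List.range (s.length + 1)).map _ ↔ s = (List.range s.length).map t
    rw [List.range_succ_eq_map, List.map_cons, List.map_map]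
    simp [Function.comp_def]

theorem exists_eq_fcons_of_fprefix_singleton {a : Act} {g : FTrc Act} (h : FPrefix [a] g) :
    ∃ g', g = fcons a g' := by
  cases g with
  | inl l =>
    obtain ⟨l', rfl⟩ := h
    exact ⟨.inl l', rfl⟩
  | inr t =>
    obtain rfl : a = t 0 := by simpa [FPrefix] using h
    refine ⟨.inr fun j => t (j + 1), congrArg Sum.inr (funext fun i => ?_)⟩
    cases i <;> rfl

theorem Represents.of_wsteps {p q : Proc} {a : Act} {g : FTrc Act}
    (hrep : Represents tr p (fcons a g)) (hw : WSteps tr p [a] q) : Represents tr q g := by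
  obtain ⟨htp, hpre⟩ := hrep
  obtain ⟨l, hl, -⟩ := hw.exists_esteps
  refine ⟨htp.of_esteps hl, fun s => ⟨fun ⟨r, hr⟩ => ?_, fun hs => ?_⟩⟩
  · exact fprefix_cons_fcons.mp ((hpre (a :: s)).mp ⟨r, hw.append hr⟩)
  · obtain ⟨r, hr⟩ := (hpre (a :: s)).mpr (fprefix_cons_fcons.mpr hs)
    exact htp.exists_wsteps_of_wsteps_cons hw hr

theorem isBisimulation_represents :
    IsBisimulation (fun p a q => WSteps tr p [a] q) (fun g a g' => g = fcons a g')
      (Represents tr) where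
  forth {_ g _ _} hrep hw := by
    obtain ⟨g', rfl⟩ := exists_eq_fcons_of_fprefix_singleton ((hrep.2 [_]).mp ⟨_, hw⟩)
    exact ⟨g', rfl, hrep.of_wsteps hw⟩
  back {_ _ _ _} hrep hg := by
    subst hg
    obtain ⟨q, hq⟩ := (hrep.2 [_]).mpr (fprefix_cons_fcons.mpr (fprefix_nil _))
    exact ⟨q, hq, hrep.of_wsteps hq⟩

end TraceProcess

/-- If a process `p` represents the finfinite trace `g`, then `g` satisfies a
closed formula `φ` under the finfinite semantics iff `p` satisfies `φ` under the
branching-time semantics. -/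
theorem trace_process_correspondence {Act Proc : Type}
    (tr : Proc → Option Act → Proc → Prop) (p : Proc) (g : FTrc Act)
    (hrep : Represents tr p g) (φ : HFrm Act) (hcl : fv φ = ∅)
    (σ : ℕ → Set (FTrc Act)) (ρ : ℕ → Set Proc) :
    g ∈ fsem φ σ ↔ p ∈ bsem tr φ ρ := by
  have hR := isBisimulation_represents (tr := tr)
  rw [fsem_eq_msem, bsem_eq_msem]
  exact ⟨hR.flip.mem_msem φ (hcl ▸ envSim_empty σ ρ) hrep,
    hR.mem_msem φ (hcl ▸ envSim_empty ρ σ) hrep⟩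
end

section
/- If process p satisfies an sHML formula φ under branching-time semantics and p subsumes p' (p produces every finfinite trace that p' produces), then p' also satisfies φ. Dually, if p violates a cHML formula φ and p subsumes p', then p' also violates φ. -/
/-- `Produces tr p g`: the process `p` produces the finfinite trace `g`
(via weak transitions). -/
def Produces {Act Proc : Type} (tr : Proc → Option Act → Proc → Prop)
    (p : Proc) : FTrc Act → Prop
  | Sum.inl s => ∃ q, WSteps tr p s q
  | Sum.inr t => ∃ f : ℕ → Proc, f 0 = p ∧ ∀ i : ℕ, WSteps tr (f i) [t i] (f (i + 1))

/-- The sHML fragment: tt, ff, [A]φ, conjunction, greatest fixpoints, variables. -/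
inductive InSHML {Act : Type} : HFrm Act → Prop
  | tt : InSHML HFrm.tt
  | ff : InSHML HFrm.ff
  | box (A : Set Act) {φ : HFrm Act} : InSHML φ → InSHML (HFrm.box A φ)
  | andf {φ ψ : HFrm Act} : InSHML φ → InSHML ψ → InSHML (HFrm.andf φ ψ)
  | fmax (X : ℕ) {φ : HFrm Act} : InSHML φ → InSHML (HFrm.fmax X φ)
  | var (X : ℕ) : InSHML (HFrm.var X)

/-- The cHML fragment: tt, ff, ⟨A⟩φ, disjunction, least fixpoints, variables. -/
inductive InCHML {Act : Type} : HFrm Act → Prop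
  | tt : InCHML HFrm.tt
  | ff : InCHML HFrm.ff
  | dia (A : Set Act) {φ : HFrm Act} : InCHML φ → InCHML (HFrm.dia A φ)
  | orf {φ ψ : HFrm Act} : InCHML φ → InCHML ψ → InCHML (HFrm.orf φ ψ)
  | fmin (X : ℕ) {φ : HFrm Act} : InCHML φ → InCHML (HFrm.fmin X φ)
  | var (X : ℕ) : InCHML (HFrm.var X)


/-!
Let `cl` be the closure operator on sets of processes induced by the finite weak trace
relation (`traceClosure`): `p' ∈ cl P` iff every finite trace of `p'` is a trace of some
`p ∈ P`. Every sHML formula denotes a `cl`-closed set: `ff` is closed because every process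
has the empty trace, `[A]` and `∧` preserve closed sets, and the greatest fixpoint of a map
preserving closed sets is closed. Dually every cHML formula denotes a set with `cl`-closed
complement. If `p` subsumes `p'` then `p' ∈ cl {p}`, so `p'` lies in every closed set
containing `p`.
-/

namespace ClosureOperator

variable {α : Type*}

theorem IsClosed.inf [CompleteLattice α] {c : ClosureOperator α} {x y : α}
    (hx : c.IsClosed x) (hy : c.IsClosed y) : c.IsClosed (x ⊓ y) :=
  c.isClosed_iff_closure_le.2 <| (c.closure_inf_le x y).trans <| by
    rw [hx.closure_eq, hy.closure_eq]

theorem isClosed_gfp [CompleteLattice α] (c : ClosureOperator α) (f : α →o α)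
    (hf : ∀ x, c.IsClosed x → c.IsClosed (f x)) : c.IsClosed f.gfp := by
  have hpost : c f.gfp ≤ f (c f.gfp) :=
    (hf _ (c.isClosed_closure _)).closure_le_iff.2 <|
      f.map_gfp.symm.le.trans (f.monotone (c.le_closure _))
  exact c.isClosed_iff_closure_le.2 (f.le_gfp hpost)

theorem isClosed_compl_lfp [CompleteBooleanAlgebra α] (c : ClosureOperator α) (f : α →o α)
    (hf : ∀ x, c.IsClosed xᶜ → c.IsClosed (f x)ᶜ) : c.IsClosed f.lfpᶜ := by
  set K := c f.lfpᶜ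
  have hKc : Kᶜ ≤ f.lfp := compl_le_iff_compl_le.1 (c.le_closure _)
  have hpre : f Kᶜ ≤ Kᶜ := by
    refine le_compl_comm.1 <|
      (hf Kᶜ (by rw [compl_compl]; exact c.isClosed_closure _)).closure_le_iff.2 ?_
    exact compl_le_compl <| (f.monotone hKc).trans f.map_lfp.le
  exact c.isClosed_iff_closure_le.2 (le_compl_comm.1 (f.lfp_le hpre))

end ClosureOperator

namespace WSteps

variable {Act S : Type} {tr : S → Option Act → S → Prop}

theorem append_s13 {p r q : S} {l₁ l₂ : List Act}
    (h₁ : WSteps tr p l₁ r) (h₂ : WSteps tr r l₂ q) : WSteps tr p (l₁ ++ l₂) q := by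
  induction h₁ with
  | refl => exact h₂
  | tau h _ ih => exact .tau h (ih h₂)
  | act h _ ih => exact .act h (ih h₂)

theorem exists_of_cons {p q : S} {a : Act} {l : List Act} (h : WSteps tr p (a :: l) q) :
    ∃ r, WSteps tr p [a] r ∧ WSteps tr r l q := by
  generalize hl : a :: l = l' at h
  induction h with
  | refl => cases hl
  | tau h _ ih =>
    obtain ⟨r, hr, hrq⟩ := ih hl
    exact ⟨r, .tau h hr, hrq⟩
  | act h hrest _ =>
    cases hl
    exact ⟨_, .act h (.refl _), hrest⟩

end WSteps

section Semantics

variable {Act Proc : Type} (tr : Proc → Option Act → Proc → Prop)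

theorem bsem_mono (φ : HFrm Act) : Monotone (bsem tr φ) := by
  induction φ with
  | tt | ff => exact fun _ _ _ => le_rfl
  | orf φ ψ ihφ ihψ => exact fun _ _ h => Set.union_subset_union (ihφ h) (ihψ h)
  | andf φ ψ ihφ ihψ => exact fun _ _ h => Set.inter_subset_inter (ihφ h) (ihψ h)
  | dia A φ ih =>
    rintro _ _ h p ⟨a, ha, q, hpq, hq⟩
    exact ⟨a, ha, q, hpq, ih h hq⟩
  | box A φ ih => exact fun _ _ h p hp a ha q hpq => ih h (hp a ha q hpq)
  | fmin X φ ih =>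
    intro ρ ρ' h p hp P hP
    exact hp P ((ih (update_le_update_iff.2 ⟨le_rfl, fun Y _ => h Y⟩)).trans hP)
  | fmax X φ ih =>
    rintro ρ ρ' h p ⟨P, hP, hpP⟩
    exact ⟨P, hP.trans (ih (update_le_update_iff.2 ⟨le_rfl, fun Y _ => h Y⟩)), hpP⟩
  | var X => exact fun _ _ h => h X

def bsemBody (φ : HFrm Act) (ρ : ℕ → Set Proc) (X : ℕ) : Set Proc →o Set Proc where
  toFun P := bsem tr φ (Function.update ρ X P)
  monotone' _ _ h := bsem_mono tr φ (Function.update_mono h)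

theorem bsem_fmin (φ : HFrm Act) (ρ : ℕ → Set Proc) (X : ℕ) :
    bsem tr (.fmin X φ) ρ = (bsemBody tr φ ρ X).lfp := rfl

theorem bsem_fmax (φ : HFrm Act) (ρ : ℕ → Set Proc) (X : ℕ) :
    bsem tr (.fmax X φ) ρ = (bsemBody tr φ ρ X).gfp := rfl

def weakBox (A : Set Act) (P : Set Proc) : Set Proc :=
  {p | ∀ a ∈ A, ∀ q, WSteps tr p [a] q → q ∈ P}

theorem bsem_box (A : Set Act) (φ : HFrm Act) (ρ : ℕ → Set Proc) :
    bsem tr (.box A φ) ρ = weakBox tr A (bsem tr φ ρ) := rfl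

theorem compl_bsem_dia (A : Set Act) (φ : HFrm Act) (ρ : ℕ → Set Proc) :
    (bsem tr (.dia A φ) ρ)ᶜ = weakBox tr A (bsem tr φ ρ)ᶜ := by
  ext p
  simp [bsem, weakBox]

end Semantics

section TraceClosure

variable {Act Proc : Type} (tr : Proc → Option Act → Proc → Prop)

def finTraces : SetRel Proc (List Act) := {x | Produces tr x.1 (.inl x.2)}

def traceClosure : ClosureOperator (Set Proc) := (finTraces tr).image_core_gc.closureOperator

variable {tr}

theorem mem_traceClosure {P : Set Proc} {p : Proc} :
    p ∈ traceClosure tr P ↔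
      ∀ s, Produces tr p (.inl s) → ∃ p₀ ∈ P, Produces tr p₀ (.inl s) :=
  Iff.rfl

theorem mem_traceClosure_singleton {p p' : Proc}
    (h : ∀ s, Produces tr p' (.inl s) → Produces tr p (.inl s)) :
    p' ∈ traceClosure tr {p} :=
  mem_traceClosure.2 fun s hs => ⟨p, rfl, h s hs⟩

theorem traceClosure_isClosed_empty : (traceClosure tr).IsClosed (∅ : Set Proc) := by
  refine (traceClosure tr).isClosed_iff_closure_le.2 fun p hp => ?_
  obtain ⟨_, h, _⟩ := mem_traceClosure.1 hp [] ⟨p, .refl p⟩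
  exact h

theorem traceClosure_isClosed_weakBox (A : Set Act) {P : Set Proc}
    (hP : (traceClosure tr).IsClosed P) : (traceClosure tr).IsClosed (weakBox tr A P) := by
  refine (traceClosure tr).isClosed_iff_closure_le.2 fun p' hp' a ha q' hq' => ?_
  rw [← hP.closure_eq]
  refine mem_traceClosure.2 fun s ⟨q'', hs⟩ => ?_
  obtain ⟨p, hp, q, hpq⟩ := mem_traceClosure.1 hp' (a :: s) ⟨q'', hq'.append_s13 hs⟩
  obtain ⟨r, hpr, hrq⟩ := hpq.exists_of_cons
  exact ⟨r, hp a ha r hpr, q, hrq⟩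

end TraceClosure

theorem forall_mem_fv_update {Act α : Type} {q : α → Prop} {φ : HFrm Act} {X : ℕ}
    {ρ : ℕ → α} {P : α} (hρ : ∀ Y ∈ fv φ \ {X}, q (ρ Y)) (hP : q P) :
    ∀ Y ∈ fv φ, q (Function.update ρ X P Y) := by
  intro Y hY
  rcases eq_or_ne Y X with rfl | hne
  · simpa using hP
  · simpa [hne] using hρ Y (by simp [hY, hne])

section Fragments

variable {Act Proc : Type} {tr : Proc → Option Act → Proc → Prop}

theorem isClosed_bsem_of_inSHML {φ : HFrm Act} (hφ : InSHML φ) {ρ : ℕ → Set Proc}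
    (hρ : ∀ X ∈ fv φ, (traceClosure tr).IsClosed (ρ X)) :
    (traceClosure tr).IsClosed (bsem tr φ ρ) := by
  induction hφ generalizing ρ with
  | tt => exact (traceClosure tr).isClosed_top
  | ff => exact traceClosure_isClosed_empty
  | box A _ ih => rw [bsem_box]; exact traceClosure_isClosed_weakBox A (ih hρ)
  | andf _ _ ih₁ ih₂ =>
    exact (ih₁ fun Y hY => hρ Y (by simp [fv, hY])).inf
      (ih₂ fun Y hY => hρ Y (by simp [fv, hY]))
  | fmax X _ ih =>
    rw [bsem_fmax]
    exact (traceClosure tr).isClosed_gfp _ fun P hP => ih (forall_mem_fv_update hρ hP)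
  | var X => exact hρ X (by simp [fv])

theorem isClosed_compl_bsem_of_inCHML {φ : HFrm Act} (hφ : InCHML φ) {ρ : ℕ → Set Proc}
    (hρ : ∀ X ∈ fv φ, (traceClosure tr).IsClosed (ρ X)ᶜ) :
    (traceClosure tr).IsClosed (bsem tr φ ρ)ᶜ := by
  induction hφ generalizing ρ with
  | tt => simpa [bsem] using traceClosure_isClosed_empty
  | ff => simpa [bsem] using (traceClosure tr).isClosed_top
  | dia A _ ih => rw [compl_bsem_dia]; exact traceClosure_isClosed_weakBox A (ih hρ)
  | orf _ _ ih₁ ih₂ =>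
    rw [bsem, Set.compl_union]
    exact (ih₁ fun Y hY => hρ Y (by simp [fv, hY])).inf
      (ih₂ fun Y hY => hρ Y (by simp [fv, hY]))
  | fmin X _ ih =>
    rw [bsem_fmin]
    exact (traceClosure tr).isClosed_compl_lfp _ fun P hP =>
      ih (forall_mem_fv_update (q := fun S => (traceClosure tr).IsClosed Sᶜ) hρ hP)
  | var X => exact hρ X (by simp [fv])

end Fragments

/-- Subsumption: if `p` satisfies a closed sHML formula and `p` produces every
finfinite trace that `p'` produces, then `p'` satisfies the formula too; dually,
if `p` violates a closed cHML formula, so does `p'`. -/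
theorem subsumption {Act Proc : Type} (tr : Proc → Option Act → Proc → Prop)
    (φ : HFrm Act) (hcl : fv φ = ∅) (ρ : ℕ → Set Proc) (p p' : Proc)
    (hsub : ∀ g : FTrc Act, Produces tr p' g → Produces tr p g) :
    (InSHML φ → p ∈ bsem tr φ ρ → p' ∈ bsem tr φ ρ) ∧
    (InCHML φ → p ∉ bsem tr φ ρ → p' ∉ bsem tr φ ρ) := by
  have hp' : p' ∈ traceClosure tr {p} := mem_traceClosure_singleton fun s => hsub (.inl s)
  have mem_of_isClosed {P : Set Proc} (hP : (traceClosure tr).IsClosed P) (hp : p ∈ P) :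
      p' ∈ P :=
    (traceClosure tr).closure_min (Set.singleton_subset_iff.2 hp) hP hp'
  constructor
  · exact fun hφ => mem_of_isClosed (isClosed_bsem_of_inSHML hφ (by simp [hcl]))
  · exact fun hφ => mem_of_isClosed (isClosed_compl_bsem_of_inCHML hφ (by simp [hcl]))
end

section
/- (Slim HML triviality) If φ is a slim HML formula and ⟦φ⟧_L = ∅ over infinite traces, then φ = ff; dually if ⟦φ⟧_L = Act^ω then φ = tt. -/
/-- Fixpoint-free HML formulae in slim normal form: truth, falsehood, a
conjunction ⋀_{a∈A}[a]φ_a of box formulae, or a disjunction ⋁_{a∈A}⟨a⟩φ_a of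
diamond formulae (given by a domain `A` and a map of continuations). -/
inductive SlimF (Act : Type) : Type
  | tt : SlimF Act
  | ff : SlimF Act
  | boxes : Set Act → (Act → SlimF Act) → SlimF Act
  | dias : Set Act → (Act → SlimF Act) → SlimF Act

/-- Linear-time semantics of slim HML formulae over infinite traces. -/
def ssem {Act : Type} : SlimF Act → Set (ℕ → Act)
  | SlimF.tt => Set.univ
  | SlimF.ff => ∅
  | SlimF.boxes A f => {t | t 0 ∈ A → (fun i => t (i + 1)) ∈ ssem (f (t 0))}
  | SlimF.dias A f => {t | t 0 ∈ A ∧ (fun i => t (i + 1)) ∈ ssem (f (t 0))}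

/-- Slim formulae: they avoid the trivially redundant subterms. In a disjunction
⋁_{a∈A}⟨a⟩φ_a, the set `A` is nonempty, no `φ_a` is `ff`, and if `A = Act` then
not all `φ_a` are `tt`. In a conjunction ⋀_{a∈A}[a]φ_a, the set `A` is nonempty,
no `φ_a` is `tt`, and if `A = Act` then not all `φ_a` are `ff`. -/
inductive IsSlim {Act : Type} : SlimF Act → Prop
  | tt : IsSlim SlimF.tt
  | ff : IsSlim SlimF.ff
  | boxes (A : Set Act) (f : Act → SlimF Act) :
      A.Nonempty →
      (∀ a ∈ A, IsSlim (f a)) →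
      (∀ a ∈ A, f a ≠ SlimF.tt) →
      ¬ (A = Set.univ ∧ ∀ a ∈ A, f a = SlimF.ff) →
      IsSlim (SlimF.boxes A f)
  | dias (A : Set Act) (f : Act → SlimF Act) :
      A.Nonempty →
      (∀ a ∈ A, IsSlim (f a)) →
      (∀ a ∈ A, f a ≠ SlimF.ff) →
      ¬ (A = Set.univ ∧ ∀ a ∈ A, f a = SlimF.tt) →
      IsSlim (SlimF.dias A f)

/-!
Every non-trivial slim formula is satisfied by some trace and falsified by another, and both
traces are built by following the formula. A conjunction of boxes either omits some action `a`,
and then every trace starting with `a` satisfies it, or it has a conjunct other than `ff`, which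
by induction has a model to continue with; a disjunction of diamonds has a branch other than
`ff` to follow. Falsifying traces are obtained dually.
-/

namespace IsSlim

variable {Act : Type} {φ : SlimF Act}

theorem ssem_nonempty [Nonempty Act] (hφ : IsSlim φ) (hff : φ ≠ .ff) : (ssem φ).Nonempty := by
  induction hφ with
  | tt => exact Set.univ_nonempty
  | ff => exact absurd rfl hff
  | boxes A f _ _ _ hnontriv ih =>
    by_cases hA : A = Set.univ
    · obtain ⟨a, ha, hfa⟩ : ∃ a ∈ A, f a ≠ .ff := by
        by_contra! hall
        exact hnontriv ⟨hA, hall⟩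
      obtain ⟨t, ht⟩ := ih a ha hfa
      exact ⟨Stream'.cons a t, fun _ => ht⟩
    · obtain ⟨a, ha⟩ := (Set.ne_univ_iff_exists_notMem A).mp hA
      exact ⟨Stream'.const a, fun h => absurd h ha⟩
  | dias A f hne _ hnff _ ih =>
    obtain ⟨a, ha⟩ := hne
    obtain ⟨t, ht⟩ := ih a ha (hnff a ha)
    exact ⟨Stream'.cons a t, ha, ht⟩

theorem compl_ssem_nonempty [Nonempty Act] (hφ : IsSlim φ) (htt : φ ≠ .tt) :
    (ssem φ)ᶜ.Nonempty := by
  induction hφ with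
  | tt => exact absurd rfl htt
  | ff => simp [ssem]
  | boxes A f hne _ hntt _ ih =>
    obtain ⟨a, ha⟩ := hne
    obtain ⟨t, ht⟩ := ih a ha (hntt a ha)
    exact ⟨Stream'.cons a t, fun h => ht (h ha)⟩
  | dias A f _ _ _ hnontriv ih =>
    by_cases hA : A = Set.univ
    · obtain ⟨a, ha, hfa⟩ : ∃ a ∈ A, f a ≠ .tt := by
        by_contra! hall
        exact hnontriv ⟨hA, hall⟩
      obtain ⟨t, ht⟩ := ih a ha hfa
      exact ⟨Stream'.cons a t, fun h => ht h.2⟩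
    · obtain ⟨a, ha⟩ := (Set.ne_univ_iff_exists_notMem A).mp hA
      exact ⟨Stream'.const a, fun h => ha h.1⟩

end IsSlim

theorem slim_triviality_general {Act : Type} [Nonempty Act]
    (φ : SlimF Act) (hslim : IsSlim φ) :
    (ssem φ = ∅ → φ = SlimF.ff) ∧ (ssem φ = Set.univ → φ = SlimF.tt) := by
  constructor
  · intro hempty
    by_contra hff
    exact (hslim.ssem_nonempty hff).ne_empty hempty
  · intro huniv
    by_contra htt
    exact (hslim.compl_ssem_nonempty htt).ne_empty (Set.compl_empty_iff.mpr huniv)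

/-- Slim HML triviality: a slim formula denoting the empty set of infinite traces
is `ff`; dually, a slim formula denoting all infinite traces is `tt`. -/
theorem slim_triviality {Act : Type} [Fintype Act] [Nonempty Act]
    (φ : SlimF Act) (hslim : IsSlim φ) :
    (ssem φ = ∅ → φ = SlimF.ff) ∧ (ssem φ = Set.univ → φ = SlimF.tt) :=
  slim_triviality_general φ hslim
end

section
/- If a guarded closed formula φ in the finfinite safety fragment (with only box modalities and greatest fixpoints) is not propositionally inconsistent, then the empty trace ε satisfies φ under finfinite semantics; consequently, if φ is equivalent to ff over finfinite traces then φ is propositionally inconsistent. -/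
/-- Propositional inconsistency of formulae in the safety fragment. -/
inductive PropInc {Act : Type} : HFrm Act → Prop
  | ff : PropInc HFrm.ff
  | andL {φ ψ : HFrm Act} : PropInc φ → PropInc (HFrm.andf φ ψ)
  | andR {φ ψ : HFrm Act} : PropInc ψ → PropInc (HFrm.andf φ ψ)
  | orf {φ ψ : HFrm Act} : PropInc φ → PropInc ψ → PropInc (HFrm.orf φ ψ)
  | fmax (X : ℕ) {φ : HFrm Act} : PropInc φ → PropInc (HFrm.fmax X φ)

/-! Every nonempty trace starts with an action, so the empty trace satisfies every box
vacuously. Hence, by induction on a safety formula that is not propositionally inconsistent,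
the empty trace satisfies it as soon as it satisfies every free variable: for `max X.φ` the
singleton of the empty trace is a post-fixed point. -/

theorem fcons_ne_nil {Act : Type} (a : Act) (g : FTrc Act) : fcons a g ≠ Sum.inl [] := by
  cases g <;> simp [fcons]

theorem nil_mem_fsem_box {Act : Type} (A : Set Act) (φ : HFrm Act) (σ : ℕ → Set (FTrc Act)) :
    (Sum.inl [] : FTrc Act) ∈ fsem (HFrm.box A φ) σ :=
  fun a _ g hg => absurd hg.symm (fcons_ne_nil a g)

theorem InSafe.nil_mem_fsem {Act : Type} {φ : HFrm Act} (hsafe : InSafe φ)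
    {σ : ℕ → Set (FTrc Act)} (hσ : ∀ Y ∈ fv φ, (Sum.inl [] : FTrc Act) ∈ σ Y)
    (hφ : ¬ PropInc φ) : (Sum.inl [] : FTrc Act) ∈ fsem φ σ := by
  induction hsafe generalizing σ with
  | tt => trivial
  | ff => exact absurd PropInc.ff hφ
  | box A _ _ => exact nil_mem_fsem_box A _ σ
  | @orf φ₁ _ _ _ ih₁ ih₂ =>
    by_cases h₁ : PropInc φ₁
    · exact Or.inr <| ih₂ (fun Y hY => hσ Y (Finset.mem_union_right _ hY))
        fun h₂ => hφ (PropInc.orf h₁ h₂)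
    · exact Or.inl <| ih₁ (fun Y hY => hσ Y (Finset.mem_union_left _ hY)) h₁
  | andf _ _ ih₁ ih₂ =>
    exact ⟨ih₁ (fun Y hY => hσ Y (Finset.mem_union_left _ hY)) (hφ ∘ PropInc.andL),
      ih₂ (fun Y hY => hσ Y (Finset.mem_union_right _ hY)) (hφ ∘ PropInc.andR)⟩
  | fmax X _ ih =>
    refine ⟨{Sum.inl []}, ?_, rfl⟩
    rintro _ rfl
    refine ih (fun Y hY => ?_) (hφ ∘ PropInc.fmax X)
    rcases eq_or_ne Y X with rfl | hYX
    · simp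
    · rw [Function.update_of_ne hYX]
      exact hσ Y (Finset.mem_sdiff.2 ⟨hY, Finset.notMem_singleton.2 hYX⟩)
  | var X => exact hσ X (Finset.mem_singleton_self X)

theorem prop_inconsistent_iff_empty_general {Act : Type} (φ : HFrm Act)
    (hsafe : InSafe φ) (hcl : fv φ = ∅)
    (σ : ℕ → Set (FTrc Act)) :
    (¬ PropInc φ → (Sum.inl [] : FTrc Act) ∈ fsem φ σ) ∧
    (fsem φ σ = ∅ → PropInc φ) := by
  have hnil : ¬ PropInc φ → (Sum.inl [] : FTrc Act) ∈ fsem φ σ :=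
    hsafe.nil_mem_fsem (by simp [hcl])
  refine ⟨hnil, fun hempty => ?_⟩
  by_contra hφ
  simpa [hempty] using hnil hφ

/-- A guarded closed formula of the finfinite safety fragment that is not
propositionally inconsistent is satisfied by the empty trace; consequently, if it
is equivalent to `ff` over finfinite traces then it is propositionally
inconsistent. -/
theorem prop_inconsistent_iff_empty {Act : Type} (φ : HFrm Act)
    (hsafe : InSafe φ) (hcl : fv φ = ∅) (hg : Guarded ∅ φ)
    (σ : ℕ → Set (FTrc Act)) :
    (¬ PropInc φ → (Sum.inl [] : FTrc Act) ∈ fsem φ σ) ∧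
    (fsem φ σ = ∅ → PropInc φ) :=
  prop_inconsistent_iff_empty_general φ hsafe hcl σ
end
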